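/- arXiv:1201.5733 — 2 statements merged into one kernel-verified Lean document; each statement's English description precedes it below -/
import Mathlib

section
/- Let σ be a continuous Kronecker measure on ℝ. Then for every rational s ∉ {0, 1} and every r ∈ ℝ, the measures σ and σ_s * δ_r are mutually singular. -/
/-!
If `σ` is not singular to its image `τ` under `A x = s x + r`, the absolutely continuous part
`ρ ≠ 0` of `σ` with respect to `τ` satisfies `ρ ≪ σ` and `B_* ρ ≪ B_* τ = σ`, where `B = A⁻¹`.
Write `s = p / q`; then `ξ_t (B x) ^ p = c_t ξ_t x ^ q` for a constant `c_t`. Approximating a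
unimodular `g` by characters `σ`-a.e. (the Kronecker property) shows that `g (B x) ^ p / g x ^ q`
is a `ρ`-a.e. limit of constants, hence `ρ`-a.e. constant. For `g = exp (i ε u)` this says that
`p u (B x) - q u x` is `ρ`-a.e. constant for every bounded `u`. Using `u = arctan` and
`u = arctan²` and eliminating `arctan (B x)`, `arctan x` is `ρ`-a.e. a root of a quadratic whose
leading coefficient `q (q - p)` is nonzero because `s ≠ 1`. So `ρ` lives on a finite set, which
is impossible for a nonzero measure without atoms.
-/

open MeasureTheory Filter Topology
open scoped ENNReal NNReal

/-- `ξ_s(x) = exp(2πisx)`. -/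
noncomputable def xi (s x : ℝ) : ℂ := Complex.exp (2 * Real.pi * Complex.I * s * x)

/-- A finite positive Borel measure on `ℝ` is a Kronecker measure. -/
def IsKronecker (σ : Measure ℝ) : Prop :=
  ∀ f : ℝ → ℂ, MemLp f 2 σ → (∀ᵐ x ∂σ, ‖f x‖ = 1) →
    ∃ t : ℕ → ℝ, Tendsto t atTop atTop ∧
      Tendsto (fun n => eLpNorm (fun x => xi (t n) x - f x) 2 σ) atTop (𝓝 0)

lemma xi_add (t a b : ℝ) : xi t (a + b) = xi t a * xi t b := by
  unfold xi; rw [← Complex.exp_add]; congr 1; push_cast; ring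

lemma xi_intCast_mul (t : ℝ) (n : ℤ) (x : ℝ) : xi t (n * x) = xi t x ^ n := by
  unfold xi; rw [← Complex.exp_int_mul]; congr 1; push_cast; ring

lemma xi_div_ratCast_zpow_num (t x : ℝ) {s : ℚ} (hs : s ≠ 0) :
    xi t (x / s) ^ s.num = xi t x ^ (s.den : ℤ) := by
  rw [← xi_intCast_mul, ← xi_intCast_mul, Rat.cast_def]
  congr 1
  field_simp
  push_cast
  ring

lemma xi_ne_zero (t x : ℝ) : xi t x ≠ 0 := Complex.exp_ne_zero _

lemma continuous_xi (t : ℝ) : Continuous (xi t) := by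
  unfold xi; fun_prop

lemma Polynomial.finite_setOf_quadratic_eq_zero {R : Type*} [CommRing R] [IsDomain R]
    {a b c : R} (ha : a ≠ 0) : {x : R | a * x ^ 2 + b * x + c = 0}.Finite := by
  have hP : C a * X ^ 2 + C b * X + C c ≠ 0 := fun h => by
    simpa [h] using degree_quadratic ha (b := b) (c := c)
  simpa using finite_setOfPred_isRoot hP

lemma Complex.eq_arg_of_exp_mul_I_eq {θ : ℝ} {z : ℂ} (h : exp (θ * I) = z)
    (hθ : θ ∈ Set.Ioc (-Real.pi) Real.pi) : θ = z.arg := by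
  rw [← h, arg_exp_mul_I, eq_comm, toIocMod_eq_self]
  simpa [two_mul, ← add_assoc] using hθ

section Kronecker

variable {σ ρ : Measure ℝ} [IsFiniteMeasure σ] {B : ℝ → ℝ} {p q : ℤ}

lemma IsKronecker.exists_tendsto_ae (hK : IsKronecker σ)
    {g : ℝ → ℂ} (hg : Measurable g) (hg1 : ∀ x, ‖g x‖ = 1) :
    ∃ t : ℕ → ℝ, ∀ᵐ x ∂σ, Tendsto (fun n => xi (t n) x) atTop (𝓝 (g x)) := by
  have hmem : MemLp g 2 σ :=
    .of_bound hg.aestronglyMeasurable 1 (.of_forall fun x => (hg1 x).le)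
  obtain ⟨t, -, ht⟩ := hK g hmem (.of_forall hg1)
  have hmeas : TendstoInMeasure σ (fun n => xi (t n)) atTop g :=
    tendstoInMeasure_of_tendsto_eLpNorm two_ne_zero
      (fun n => (continuous_xi _).aestronglyMeasurable) hg.aestronglyMeasurable ht
  obtain ⟨φ, -, hφ⟩ := hmeas.exists_seq_tendsto_ae
  exact ⟨t ∘ φ, hφ⟩

lemma IsKronecker.exists_ae_eq_const_mul (hK : IsKronecker σ) (hρσ : ρ ≪ σ)
    (hB : Measurable B) (hBσ : ρ.map B ≪ σ)
    (hxi : ∀ t, ∃ c : ℂ, ∀ x, xi t (B x) ^ p = c * xi t x ^ q)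
    {g : ℝ → ℂ} (hg : Measurable g) (hg1 : ∀ x, ‖g x‖ = 1) :
    ∃ L : ℂ, ∀ᵐ x ∂ρ, g (B x) ^ p = L * g x ^ q := by
  have hg0 x : g x ≠ 0 := norm_ne_zero_iff.mp (by simp [hg1])
  obtain ⟨t, ht⟩ := hK.exists_tendsto_ae hg hg1
  choose c hc using hxi
  have hlim : ∀ᵐ x ∂ρ, Tendsto (fun n => c (t n)) atTop (𝓝 (g (B x) ^ p / g x ^ q)) := by
    filter_upwards [hρσ.ae_le ht, ae_of_ae_map hB.aemeasurable (hBσ.ae_le ht)] with x hx hBx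
    have hc' n : c (t n) = xi (t n) (B x) ^ p / xi (t n) x ^ q := by
      rw [hc, mul_div_cancel_right₀ _ (zpow_ne_zero _ (xi_ne_zero _ _))]
    simp only [hc']
    exact (hBx.zpow₀ p (.inl (hg0 _))).div (hx.zpow₀ q (.inl (hg0 x)))
      (zpow_ne_zero _ (hg0 x))
  rcases eq_or_ne ρ 0 with rfl | hρ
  · exact ⟨0, by simp⟩
  have := ae_neBot.mpr hρ
  obtain ⟨x₀, hx₀⟩ := hlim.exists
  refine ⟨g (B x₀) ^ p / g x₀ ^ q, ?_⟩
  filter_upwards [hlim] with x hx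
  rw [← tendsto_nhds_unique hx hx₀, div_mul_cancel₀ _ (zpow_ne_zero _ (hg0 x))]

lemma IsKronecker.exists_ae_sub_eq_const (hK : IsKronecker σ) (hρσ : ρ ≪ σ)
    (hB : Measurable B) (hBσ : ρ.map B ≪ σ)
    (hxi : ∀ t, ∃ c : ℂ, ∀ x, xi t (B x) ^ p = c * xi t x ^ q)
    {u : ℝ → ℝ} (hu : Measurable u) {M : ℝ} (hM : ∀ x, |u x| ≤ M) :
    ∃ c : ℝ, ∀ᵐ x ∂ρ, p * u (B x) - q * u x = c := by
  have hM0 : 0 ≤ M := (abs_nonneg _).trans (hM 0)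
  set K : ℝ := (|(p : ℝ)| + |(q : ℝ)|) * M
  set ε : ℝ := (K + 1)⁻¹
  have hε : 0 < ε := by positivity
  -- `ε` is small enough that `arg` recovers `ε * (p * u (B x) - q * u x)` from its `exp (· * I)`
  have hsmall (x : ℝ) : |ε * ((p : ℝ) * u (B x) - q * u x)| < Real.pi := by
    have hw : |(p : ℝ) * u (B x) - q * u x| ≤ K := by
      calc |(p : ℝ) * u (B x) - q * u x| ≤ |(p : ℝ)| * |u (B x)| + |(q : ℝ)| * |u x| := by
            simpa only [abs_mul] using abs_sub ((p : ℝ) * u (B x)) (q * u x)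
        _ ≤ |(p : ℝ)| * M + |(q : ℝ)| * M := by gcongr <;> exact hM _
        _ = K := by ring
    calc |ε * ((p : ℝ) * u (B x) - q * u x)| ≤ ε * K := by
          rw [abs_mul, abs_of_pos hε]; gcongr
      _ < 1 := by rw [inv_mul_lt_one₀ (by positivity)]; linarith
      _ < Real.pi := by linarith [Real.pi_gt_three]
  obtain ⟨L, hL⟩ := hK.exists_ae_eq_const_mul hρσ hB hBσ hxi
    (g := fun x => Complex.exp (↑(ε * u x) * Complex.I)) (by fun_prop)
    (fun x => Complex.norm_exp_ofReal_mul_I _)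
  refine ⟨L.arg / ε, ?_⟩
  filter_upwards [hL] with x hx
  rw [eq_div_iff hε.ne', mul_comm]
  refine Complex.eq_arg_of_exp_mul_I_eq ?_ (Set.Ioo_subset_Ioc_self (abs_lt.mp (hsmall x)))
  rw [eq_comm, ← div_eq_of_eq_mul (zpow_ne_zero _ (Complex.exp_ne_zero _)) hx,
    ← Complex.exp_int_mul, ← Complex.exp_int_mul, ← Complex.exp_sub]
  congr 1
  push_cast
  ring

lemma IsKronecker.exists_finite_ae_mem (hK : IsKronecker σ) (hρσ : ρ ≪ σ)
    (hB : Measurable B) (hBσ : ρ.map B ≪ σ)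
    (hxi : ∀ t, ∃ c : ℂ, ∀ x, xi t (B x) ^ p = c * xi t x ^ q) (hq : q ≠ 0) (hpq : p ≠ q) :
    ∃ S : Set ℝ, S.Finite ∧ ∀ᵐ x ∂ρ, x ∈ S := by
  have harctan (x : ℝ) : |Real.arctan x| ≤ Real.pi / 2 :=
    abs_le.mpr ⟨(Real.neg_pi_div_two_lt_arctan x).le, (Real.arctan_lt_pi_div_two x).le⟩
  obtain ⟨c₁, h₁⟩ := hK.exists_ae_sub_eq_const hρσ hB hBσ hxi Real.measurable_arctan harctan
  obtain ⟨c₂, h₂⟩ := hK.exists_ae_sub_eq_const hρσ hB hBσ hxi (u := fun x => Real.arctan x ^ 2)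
    (by fun_prop) (fun x => by rw [abs_pow]; exact pow_le_pow_left₀ (abs_nonneg _) (harctan x) 2)
  have hlead : (q : ℝ) * (q - p) ≠ 0 :=
    mul_ne_zero (by exact_mod_cast hq) (sub_ne_zero.mpr (by exact_mod_cast hpq.symm))
  -- eliminating `arctan (B x)` from the two relations leaves a quadratic equation for `arctan x`
  refine ⟨Real.arctan ⁻¹' {y | (q * (q - p)) * y ^ 2 + (2 * c₁ * q) * y + (c₁ ^ 2 - p * c₂) = 0},
    (Polynomial.finite_setOf_quadratic_eq_zero hlead).preimage Real.arctan_injective.injOn, ?_⟩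
  filter_upwards [h₁, h₂] with x hx₁ hx₂
  simp only [Set.mem_preimage, Set.mem_ofPred_eq]
  linear_combination (-(c₁ + p * Real.arctan (B x) + q * Real.arctan x)) * hx₁ + p * hx₂

end Kronecker

theorem statement4_general (σ : Measure ℝ) [IsFiniteMeasure σ]
    (hcont : ∀ x, σ {x} = 0) (hK : IsKronecker σ)
    (s : ℚ) (hs0 : s ≠ 0) (hs1 : s ≠ 1) (r : ℝ) :
    σ ⟂ₘ (σ.map (fun x => (s : ℝ) * x)).map (fun x => x + r) := by
  set A : ℝ → ℝ := fun x => s * x + r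
  set B : ℝ → ℝ := fun y => (y - r) / s
  have hA : Measurable A := by fun_prop
  have hB : Measurable B := by fun_prop
  rw [Measure.map_map (by fun_prop) (by fun_prop), ← Measure.withDensity_rnDeriv_eq_zero]
  change (σ.map A).withDensity (σ.rnDeriv (σ.map A)) = 0
  set ρ := (σ.map A).withDensity (σ.rnDeriv (σ.map A))
  have hρσ : ρ ≪ σ := Measure.absolutelyContinuous_of_le (Measure.withDensity_rnDeriv_le _ _)
  have hBσ : ρ.map B ≪ σ := by
    have hBA : B ∘ A = id := funext fun x => by simp [A, B, (Rat.cast_ne_zero (α := ℝ)).mpr hs0]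
    have := (withDensity_absolutelyContinuous (σ.map A) (σ.rnDeriv (σ.map A))).map hB
    rwa [Measure.map_map hB hA, hBA, Measure.map_id] at this
  have hxi t : ∃ c : ℂ, ∀ y, xi t (B y) ^ s.num = c * xi t y ^ (s.den : ℤ) :=
    ⟨xi t (-r) ^ (s.den : ℤ), fun y => by
      rw [xi_div_ratCast_zpow_num t _ hs0, sub_eq_add_neg, xi_add, mul_zpow, mul_comm]⟩
  have hnd : s.num ≠ s.den := fun h => hs1 (by rw [← Rat.num_div_den s, h]; simp)
  obtain ⟨S, hS, hρS⟩ :=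
    hK.exists_finite_ae_mem hρσ hB hBσ hxi (by exact_mod_cast s.den_nz) hnd
  have : NullSingletonClass ρ := ⟨fun x => hρσ (hcont x)⟩
  rw [← ae_eq_bot, ← eventually_false_iff_eq_bot]
  filter_upwards [hρS, hS.countable.ae_notMem ρ] with x hx hx' using hx' hx

theorem statement4 (σ : Measure ℝ) [IsFiniteMeasure σ] (hσpos : σ ≠ 0)
    (hcont : ∀ x, σ {x} = 0) (hK : IsKronecker σ)
    (s : ℚ) (hs0 : s ≠ 0) (hs1 : s ≠ 1) (r : ℝ) :
    σ ⟂ₘ (σ.map (fun x => (s : ℝ) * x)).map (fun x => x + r) :=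
  statement4_general σ hcont hK s hs0 hs1 r
end

section
/- Let σ and ν be finite positive Borel measures on ℝ, let (u_k) be a sequence of real numbers, and let c be a nonzero complex number. Assume that ξ_{u_k} → c·1 weakly in L²(ℝ, σ) and ξ_{u_k} → 0 weakly in L²(ℝ, ν). Then for every t ∈ ℝ, ξ_{u_k} → 0 weakly in L²(ℝ, ν * δ_t), and the measures σ and ν * δ_t are mutually singular. -/
open MeasureTheory Filter Topology
open scoped ENNReal NNReal

/-- Weak convergence of a sequence to `g` in `L²(ℝ, ν)`. -/
def WeakL2Tendsto (φ : ℕ → ℝ → ℂ) (g : ℝ → ℂ) (ν : Measure ℝ) : Prop :=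
  ∀ f : ℝ → ℂ, MemLp f 2 ν →
    Tendsto (fun n => ∫ x, φ n x * (starRingEnd ℂ) (f x) ∂ν) atTop
      (𝓝 (∫ x, g x * (starRingEnd ℂ) (f x) ∂ν))


/-!
Translating by `t` multiplies `ξ_s` by the unimodular constant `ξ_s(t)`, so weak convergence
to `0` survives the shift. For singularity of two finite measures `σ`, `μ` carrying
`ξ_{u_k} ⇀ c ≠ 0` and `ξ_{u_k} ⇀ 0` respectively, test against the bounded density
`b = dμ/d(σ + μ)`: since `∫ φ b dσ + ∫ φ b dμ = ∫ φ dμ`, passing to the limit gives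
`c ∫ b dσ = 0`. Hence `b = 0` `σ`-a.e., while `μ` does not charge `{b = 0}`.
-/

lemma norm_xi (s x : ℝ) : ‖xi s x‖ = 1 := by
  rw [xi, show 2 * Real.pi * Complex.I * s * x = ((2 * Real.pi * s * x : ℝ) : ℂ) * Complex.I by
    push_cast; ring]
  exact Complex.norm_exp_ofReal_mul_I _

lemma xi_add_s18 (s x y : ℝ) : xi s (x + y) = xi s x * xi s y := by
  simp only [xi, ← Complex.exp_add]
  congr 1
  push_cast
  ring

lemma integrable_xi (μ : Measure ℝ) [IsFiniteMeasure μ] (s : ℝ) : Integrable (xi s) μ :=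
  .of_bound (by unfold xi; fun_prop) 1 (.of_forall fun x => (norm_xi s x).le)

lemma WeakL2Tendsto.xi_map_add_const {ν : Measure ℝ} {u : ℕ → ℝ}
    (hν : WeakL2Tendsto (fun k x => xi (u k) x) (fun _ => 0) ν) (t : ℝ) :
    WeakL2Tendsto (fun k x => xi (u k) x) (fun _ => 0) (ν.map (fun x => x + t)) := by
  have ht : MeasurableEmbedding (fun x : ℝ => x + t) :=
    (Homeomorph.addRight t).measurableEmbedding
  intro f hf
  have hshift : ∀ k, ∫ x, xi (u k) x * (starRingEnd ℂ) (f x) ∂(ν.map (fun x => x + t))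
      = xi (u k) t * ∫ x, xi (u k) x * (starRingEnd ℂ) (f (x + t)) ∂ν := by
    intro k
    simp only [ht.integral_map, ← integral_const_mul, xi_add_s18, mul_assoc,
      mul_left_comm (xi (u k) t)]
  have h0 := hν (fun x => f (x + t)) (ht.memLp_map_measure_iff.mp hf)
  simp only [zero_mul, integral_zero] at h0 ⊢
  simp only [hshift]
  rw [tendsto_zero_iff_norm_tendsto_zero] at h0 ⊢
  simpa only [norm_mul, norm_xi, one_mul] using h0

section RadonNikodym

variable {α : Type*} [MeasurableSpace α] {σ μ : Measure α}
  [IsFiniteMeasure σ] [IsFiniteMeasure μ]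

lemma memLp_top_toReal_rnDeriv_add :
    MemLp (fun x => ((μ.rnDeriv (σ + μ) x).toReal : ℂ)) ∞ (σ + μ) := by
  refine memLp_top_of_bound
    (Measure.measurable_rnDeriv μ _).ennreal_toReal.complex_ofReal.aestronglyMeasurable 1 ?_
  filter_upwards [Measure.rnDeriv_le_one_of_le (Measure.le_add_left le_rfl)] with x hx
  rw [Complex.norm_real, Real.norm_of_nonneg ENNReal.toReal_nonneg]
  exact ENNReal.toReal_le_of_le_ofReal zero_le_one (by simpa using hx)

lemma integral_mul_toReal_rnDeriv_add {f : α → ℂ}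
    (hfσ : Integrable f σ) (hfμ : Integrable f μ) :
    ∫ x, f x * (μ.rnDeriv (σ + μ) x).toReal ∂σ + ∫ x, f x * (μ.rnDeriv (σ + μ) x).toReal ∂μ
      = ∫ x, f x ∂μ := by
  have hint : ∀ ρ ≤ σ + μ, Integrable f ρ →
      Integrable (fun x => f x * (μ.rnDeriv (σ + μ) x).toReal) ρ := fun ρ hρ hf =>
    hf.mul_of_top_left (memLp_top_toReal_rnDeriv_add.mono_measure hρ)
  rw [← integral_add_measure (hint σ (Measure.le_add_right le_rfl) hfσ)
    (hint μ (Measure.le_add_left le_rfl) hfμ),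
    ← integral_rnDeriv_smul (μ := μ) (rfl.absolutelyContinuous.add_right' σ)]
  simp only [Complex.real_smul, mul_comm]

lemma Measure.mutuallySingular_of_integral_toReal_rnDeriv_add_eq_zero
    (h : ∫ x, (μ.rnDeriv (σ + μ) x).toReal ∂σ = 0) : σ ⟂ₘ μ := by
  set S := {x | μ.rnDeriv (σ + μ) x = 0}
  have hS : MeasurableSet S := Measure.measurable_rnDeriv μ _ (measurableSet_singleton 0)
  have hint : Integrable (fun x => (μ.rnDeriv (σ + μ) x).toReal) σ :=
    Measure.integrable_toReal_rnDeriv.mono_measure (Measure.le_add_right le_rfl)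
  have hσS : ∀ᵐ x ∂σ, x ∈ S := by
    filter_upwards
      [(integral_eq_zero_iff_of_nonneg (fun _ => ENNReal.toReal_nonneg) hint).mp h,
      (ae_add_measure_iff.mp (Measure.rnDeriv_lt_top μ (σ + μ))).1] with x hx hfin
    exact ((ENNReal.toReal_eq_zero_iff _).mp hx).resolve_right hfin.ne
  have hμS : μ S = 0 := by
    rw [← Measure.setLIntegral_rnDeriv (rfl.absolutelyContinuous.add_right' σ) S]
    exact setLIntegral_eq_zero hS fun x hx => hx
  exact ⟨Sᶜ, hS.compl, ae_iff.mp hσS, by rwa [compl_compl]⟩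

end RadonNikodym

lemma mutuallySingular_of_weakL2Tendsto {σ μ : Measure ℝ}
    [IsFiniteMeasure σ] [IsFiniteMeasure μ]
    {φ : ℕ → ℝ → ℂ} {c : ℂ} (hc : c ≠ 0)
    (hφσ : ∀ k, Integrable (φ k) σ) (hφμ : ∀ k, Integrable (φ k) μ)
    (hσ : WeakL2Tendsto φ (fun _ => c) σ) (hμ : WeakL2Tendsto φ (fun _ => 0) μ) : σ ⟂ₘ μ := by
  set b : ℝ → ℂ := fun x => ((μ.rnDeriv (σ + μ) x).toReal : ℂ)
  have hb : ∀ ρ ≤ σ + μ, MemLp b 2 ρ := fun ρ hρ =>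
    (memLp_top_toReal_rnDeriv_add.mono_exponent le_top).mono_measure hρ
  have hlimσ := hσ b (hb σ (Measure.le_add_right le_rfl))
  have hlimμ := hμ b (hb μ (Measure.le_add_left le_rfl))
  have hlim1 := hμ 1 (memLp_const 1)
  simp only [b, Complex.conj_ofReal, Pi.one_apply, map_one, mul_one, zero_mul, integral_zero,
    integral_const_mul, integral_complex_ofReal] at hlimσ hlimμ hlim1
  simp only [← integral_mul_toReal_rnDeriv_add (hφσ _) (hφμ _)] at hlim1
  have hzero : c * ↑(∫ x, (μ.rnDeriv (σ + μ) x).toReal ∂σ) = 0 := by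
    simpa using tendsto_nhds_unique (hlimσ.add hlimμ) hlim1
  exact Measure.mutuallySingular_of_integral_toReal_rnDeriv_add_eq_zero
    (by exact_mod_cast (mul_eq_zero.mp hzero).resolve_left hc)

theorem statement18 (σ ν : Measure ℝ) [IsFiniteMeasure σ] [IsFiniteMeasure ν]
    (u : ℕ → ℝ) (c : ℂ) (hc : c ≠ 0)
    (hσ : WeakL2Tendsto (fun k x => xi (u k) x) (fun _ => c) σ)
    (hν : WeakL2Tendsto (fun k x => xi (u k) x) (fun _ => 0) ν) :
    ∀ t : ℝ,
      WeakL2Tendsto (fun k x => xi (u k) x) (fun _ => 0) (ν.map (fun x => x + t)) ∧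
      σ ⟂ₘ ν.map (fun x => x + t) := by
  intro t
  have hνt := hν.xi_map_add_const t
  exact ⟨hνt, mutuallySingular_of_weakL2Tendsto hc (fun k => integrable_xi σ (u k))
    (fun k => integrable_xi _ (u k)) hσ hνt⟩
end
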